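/- Let λ₁ ≤ ... ≤ λₙ be positive reals with λ₁⋯λₙ = K > 0 and λ₂ ≥ λₙ/2. Then λ₁ ≤ K·2^{n-2}/λₙ^{n-1}, and consequently −∑_{2 ≤ i < j ≤ n}(λᵢ−λⱼ)² + 2λ₁(∑_{i=2}^n λᵢ) ≤ 2^{n-1}(n-1)K/λₙ^{n-2}. -/
import Mathlib


open scoped BigOperators

/-- Let `λ₁ ≤ ⋯ ≤ λₙ` be positive reals with `λ₁⋯λₙ = K > 0` and `λ₂ ≥ λₙ/2`.  Then
`λ₁ ≤ K·2^{n-2}/λₙ^{n-1}`, and consequently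
`−∑_{2 ≤ i < j ≤ n}(λᵢ−λⱼ)² + 2λ₁(∑_{i=2}^n λᵢ) ≤ 2^{n-1}(n-1)K/λₙ^{n-2}`.
(0-based indices: `λ 0 = λ₁`, `λ ⟨1,_⟩ = λ₂`, `λ ⟨n-1,_⟩ = λₙ`.) -/
theorem stmt_2 (n : ℕ) (hn : 2 ≤ n) (K : ℝ) (hK : 0 < K)
    (lam : Fin n → ℝ) (hmono : Monotone lam) (hpos : ∀ i, 0 < lam i)
    (hprod : (∏ i, lam i) = K)
    (h2 : lam ⟨1, by omega⟩ ≥ lam ⟨n - 1, by omega⟩ / 2) :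
    lam ⟨0, by omega⟩ ≤ K * 2 ^ (n - 2) / (lam ⟨n - 1, by omega⟩) ^ (n - 1) ∧
    -(∑ i : Fin n, ∑ j : Fin n,
        if 1 ≤ (i : ℕ) ∧ (i : ℕ) < (j : ℕ) then (lam i - lam j) ^ 2 else 0)
      + 2 * lam ⟨0, by omega⟩ * (∑ i : Fin n, if 1 ≤ (i : ℕ) then lam i else 0)
      ≤ 2 ^ (n - 1) * (n - 1 : ℝ) * K / (lam ⟨n - 1, by omega⟩) ^ (n - 2) := by
  set i0 : Fin n := ⟨0, by omega⟩ with hi0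
  set i1 : Fin n := ⟨1, by omega⟩ with hi1
  set iN : Fin n := ⟨n - 1, by omega⟩ with hiN
  have hL : 0 < lam iN := hpos iN
  have h0 : 0 < lam i0 := hpos i0
  have h0N : i0 ≠ iN := by simp [hi0, hiN, Fin.ext_iff]; omega
  have hsub : ({i0, iN} : Finset (Fin n)) ⊆ Finset.univ := Finset.subset_univ _
  set s : Finset (Fin n) := Finset.univ \ {i0, iN} with hs
  have hcard : s.card = n - 2 := by
    rw [hs, Finset.card_sdiff_of_subset hsub, Finset.card_univ, Fintype.card_fin,
      Finset.card_pair h0N]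
  have hsplit : (∏ i ∈ s, lam i) * (lam i0 * lam iN) = K := by
    rw [← Finset.prod_pair h0N, hs, Finset.prod_sdiff hsub, hprod]
  have hlow : ∀ i ∈ s, lam iN / 2 ≤ lam i := by
    intro i hi
    rw [hs, Finset.mem_sdiff] at hi
    have hne : i ≠ i0 := fun h => hi.2 (by simp [h])
    have h1le : i1 ≤ i := by
      rw [Fin.le_def]
      have : (i : ℕ) ≠ 0 := fun h => hne (Fin.ext h)
      simpa [hi1] using Nat.one_le_iff_ne_zero.2 this
    exact le_trans h2 (hmono h1le)
  have hprodlow : (lam iN / 2) ^ (n - 2) ≤ ∏ i ∈ s, lam i := by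
    calc (lam iN / 2) ^ (n - 2) = ∏ _i ∈ s, lam iN / 2 := by
          rw [Finset.prod_const, hcard]
      _ ≤ ∏ i ∈ s, lam i :=
          Finset.prod_le_prod (fun i _ => by positivity) hlow
  have key : lam i0 * (lam iN / 2) ^ (n - 2) * lam iN ≤ K := by
    rw [← hsplit]
    have := mul_le_mul_of_nonneg_right hprodlow
      (le_of_lt (mul_pos h0 hL))
    nlinarith
  have h2p : (0 : ℝ) < 2 ^ (n - 2) := by positivity
  have hLp : (0 : ℝ) < lam iN ^ (n - 2) := by positivity
  have hpow1 : lam iN ^ (n - 1) = lam iN ^ (n - 2) * lam iN := by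
    rw [← pow_succ]; congr 1; omega
  have hpow2 : (2 : ℝ) ^ (n - 1) = 2 ^ (n - 2) * 2 := by
    rw [← pow_succ]; congr 1; omega
  have part1 : lam i0 ≤ K * 2 ^ (n - 2) / lam iN ^ (n - 1) := by
    rw [le_div_iff₀ (by positivity), hpow1]
    have hdp : (lam iN / 2) ^ (n - 2) = lam iN ^ (n - 2) / 2 ^ (n - 2) :=
      div_pow _ _ _
    rw [hdp] at key
    have := mul_le_mul_of_nonneg_right key (le_of_lt h2p)
    field_simp at this ⊢
    nlinarith
  refine ⟨part1, ?_⟩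
  have hsq : (0 : ℝ) ≤ ∑ i : Fin n, ∑ j : Fin n,
      if 1 ≤ (i : ℕ) ∧ (i : ℕ) < (j : ℕ) then (lam i - lam j) ^ 2 else 0 := by
    refine Finset.sum_nonneg fun i _ => Finset.sum_nonneg fun j _ => ?_
    split <;> positivity
  have hSnonneg : (0 : ℝ) ≤ ∑ i : Fin n, if 1 ≤ (i : ℕ) then lam i else 0 := by
    refine Finset.sum_nonneg fun i _ => ?_
    split
    · exact (hpos i).le
    · exact le_refl 0
  have hSle : (∑ i : Fin n, if 1 ≤ (i : ℕ) then lam i else 0)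
      ≤ (n - 1 : ℝ) * lam iN := by
    have step1 : (∑ i : Fin n, if 1 ≤ (i : ℕ) then lam i else 0)
        ≤ ∑ i : Fin n, if 1 ≤ (i : ℕ) then lam iN else 0 := by
      refine Finset.sum_le_sum fun i _ => ?_
      split
      · refine hmono ?_
        rw [Fin.le_def]; simp [hiN]; omega
      · exact le_refl 0
    refine step1.trans_eq ?_
    have heq : ∀ i : Fin n, (if 1 ≤ (i : ℕ) then lam iN else 0)
        = lam iN - (if i = i0 then lam iN else 0) := by
      intro i
      by_cases h : i = i0
      · simp [h, hi0]
      · have : (i : ℕ) ≠ 0 := fun hh => h (Fin.ext hh)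
        simp [h, Nat.one_le_iff_ne_zero.2 this]
    rw [Finset.sum_congr rfl fun i _ => heq i, Finset.sum_sub_distrib,
      Finset.sum_const, Finset.sum_ite_eq' Finset.univ i0 fun _ => lam iN]
    simp [Finset.card_univ]
    have : ((n : ℝ)) * lam iN - lam iN = (n - 1 : ℝ) * lam iN := by ring
    linarith [this]
  have hmain : 2 * lam i0 * (∑ i : Fin n, if 1 ≤ (i : ℕ) then lam i else 0)
      ≤ 2 ^ (n - 1) * (n - 1 : ℝ) * K / lam iN ^ (n - 2) := by
    have step1 : 2 * lam i0 * (∑ i : Fin n, if 1 ≤ (i : ℕ) then lam i else 0)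
        ≤ 2 * lam i0 * ((n - 1 : ℝ) * lam iN) := by
      have : (0 : ℝ) ≤ 2 * lam i0 := by positivity
      exact mul_le_mul_of_nonneg_left hSle this
    refine step1.trans ?_
    have hn1 : (0 : ℝ) ≤ (n - 1 : ℝ) := by
      have : (2 : ℝ) ≤ n := by exact_mod_cast hn
      linarith
    have step2 : 2 * lam i0 * ((n - 1 : ℝ) * lam iN)
        ≤ 2 * (K * 2 ^ (n - 2) / lam iN ^ (n - 1)) * ((n - 1 : ℝ) * lam iN) := by
      have hf : (0 : ℝ) ≤ 2 * ((n - 1 : ℝ) * lam iN) := by positivity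
      nlinarith [mul_le_mul_of_nonneg_right part1 hf]
    refine step2.trans_eq ?_
    rw [hpow1, hpow2]
    field_simp
  linarith
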